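/- Let (x1, y1) and (x2, y2) be pairs of vertices of G such that every pair of paths (P1, P2) ∈ Π(x1, y1) × Π(x2, y2) shares an internal vertex. Then for every integer k ≥ 1, the following polynomial identity holds: F_{disj,k}(x1, y1, x2, y2) = Σ_{v, w ∈ V} D_{v,w,k}(x1, y1, x2, y2). -/

import Mathlib

open scoped BigOperators

namespace DSP

variable {V : Type*} [Fintype V] [DecidableEq V]

/-- A path: a nonempty list of distinct vertices in which each consecutive
pair is joined by a directed edge. -/
def IsPath (E : V → V → Prop) (p : List V) : Prop :=
  p ≠ [] ∧ p.Nodup ∧ p.Chain' E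

/-- A path from `x` to `y`. -/
def IsPathFrom (E : V → V → Prop) (p : List V) (x y : V) : Prop :=
  IsPath E p ∧ p.head? = some x ∧ p.getLast? = some y

/-- The (ordered) list of edges of a path. -/
def pathEdges (p : List V) : List (V × V) := p.zip p.tail

/-- The weight of a path: the sum of its edge weights. -/
def pathWeight (ℓ : V → V → ℝ) (p : List V) : ℝ :=
  ((pathEdges p).map fun e => ℓ e.1 e.2).sum

/-- `dist x y` : the minimum weight of a path from `x` to `y`
(`⊤` if there is no such path). -/
noncomputable def dist (E : V → V → Prop) (ℓ : V → V → ℝ) (x y : V) : EReal :=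
  sInf {w : EReal | ∃ p : List V, IsPathFrom E p x y ∧ (pathWeight ℓ p : EReal) = w}

/-- A shortest path from `x` to `y` : a path from `x` to `y` whose weight
equals `dist x y`.  `Π(x, y)` is the set of all such paths. -/
def IsShortestPath (E : V → V → Prop) (ℓ : V → V → ℝ) (p : List V) (x y : V) : Prop :=
  IsPathFrom E p x y ∧ (pathWeight ℓ p : EReal) = dist E ℓ x y

/-- A directed cycle: a closed walk with at least one edge whose internal
vertices are pairwise distinct. -/
def IsCycle (E : V → V → Prop) (p : List V) : Prop :=
  2 ≤ p.length ∧ p.Chain' E ∧ p.head? = p.getLast? ∧ p.tail.Nodup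

/-- `G` contains no directed cycle of negative or zero total weight. -/
def NoNonposCycle (E : V → V → Prop) (ℓ : V → V → ℝ) : Prop :=
  ∀ p : List V, IsCycle E p → 0 < pathWeight ℓ p

/-- `G` is a DAG: it contains no directed cycle. -/
def Acyclic (E : V → V → Prop) : Prop :=
  ∀ p : List V, ¬ IsCycle E p

/-- `x` precedes `y` on the path `p` (`x = y` allowed). -/
def Precedes (p : List V) (x y : V) : Prop :=
  x ∈ p ∧ y ∈ p ∧ p.idxOf x ≤ p.idxOf y

/-- `subpath p x y` : the subpath `p[x, y]` of `p` from `x` to `y`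
(for `x` preceding `y` on `p`). -/
def subpath (p : List V) (x y : V) : List V :=
  (p.take (p.idxOf y + 1)).drop (p.idxOf x)

/-- Concatenation `p · q` of two paths (the last vertex of `p` coinciding
with the first vertex of `q`). -/
def pathConcat (p q : List V) : List V := p ++ q.tail

/-- A vertex is internal to a path if it lies on it and is not an endpoint. -/
def Internal (p : List V) (v : V) : Prop :=
  v ∈ p ∧ p.head? ≠ some v ∧ p.getLast? ≠ some v

/-- Paths `p1` from `x1` to `y1` and `p2` from `x2` to `y2` are internally
vertex-disjoint: they share no vertices except possibly those in
`{x1, y1} ∩ {x2, y2}`. -/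
def InternallyDisjoint (p1 : List V) (x1 y1 : V) (p2 : List V) (x2 y2 : V) : Prop :=
  ∀ u, u ∈ p1 → u ∈ p2 → u ∈ ({x1, y1} ∩ {x2, y2} : Set V)

/-- `(a, b)` is a twin-crossing pair for paths `p1`, `p2`. -/
def TwinCrossingPair (p1 p2 : List V) (a b : V) : Prop :=
  a ≠ b ∧ Precedes p1 a b ∧ Precedes p2 a b ∧ subpath p1 a b ≠ subpath p2 a b

/-- The swap operation `φ_{a,b}(P1, P2)`. -/
def swap (p1 : List V) (x1 y1 : V) (p2 : List V) (x2 y2 : V) (a b : V) :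
    List V × List V :=
  (pathConcat (pathConcat (subpath p1 x1 a) (subpath p2 a b)) (subpath p1 b y1),
   pathConcat (pathConcat (subpath p2 x2 a) (subpath p1 a b)) (subpath p2 b y2))

/-- The graph with vertex `u` deleted. -/
def deleteVertex (E : V → V → Prop) (u : V) : V → V → Prop :=
  fun a b => E a b ∧ a ≠ u ∧ b ≠ u

/-- `u` is distance-critical for `(x, y)` : deleting `u` strictly increases
the distance from `x` to `y`. -/
def DistCritical (E : V → V → Prop) (ℓ : V → V → ℝ) (x y u : V) : Prop :=
  dist E ℓ x y < dist (deleteVertex E u) ℓ x y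

/-- `Δ(x, y)` : the distance-critical vertices for `(x, y)` together with the
endpoints `x`, `y`. -/
def Delta (E : V → V → Prop) (ℓ : V → V → ℝ) (x y : V) : Set V :=
  {u | DistCritical E ℓ x y u} ∪ {x, y}

/-- `δ(x, y) = |Δ(x, y)|`. -/
noncomputable def deltaCard (E : V → V → Prop) (ℓ : V → V → ℝ) (x y : V) : ℕ :=
  (Delta E ℓ x y).ncard

/-- `(a, b)` is a concordant pair for paths `p1` (from `x1` to `y1`) and
`p2` (from `x2` to `y2`). -/
def ConcordantPair (p1 : List V) (x1 y1 : V) (p2 : List V) (x2 y2 : V) (a b : V) : Prop :=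
  a ∉ ({x1, y1} ∩ {x2, y2} : Set V) ∧ b ∉ ({x1, y1} ∩ {x2, y2} : Set V) ∧
  Precedes p1 a b ∧ Precedes p2 a b ∧
  InternallyDisjoint (subpath p1 x1 a) x1 a (subpath p2 x2 a) x2 a ∧
  InternallyDisjoint (subpath p1 b y1) b y1 (subpath p2 b y2) b y2

/-- `𝒞(P1, P2)` : the set of concordant pairs for `(P1, P2)`. -/
def concordantSet (p1 : List V) (x1 y1 : V) (p2 : List V) (x2 y2 : V) : Set (V × V) :=
  {c | ConcordantPair p1 x1 y1 p2 x2 y2 c.1 c.2}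

/-- The interaction complexity `γ(P1, P2) = Σ_{(v,w) ∈ 𝒞(P1,P2)} δ(v, w)`. -/
noncomputable def gamma (E : V → V → Prop) (ℓ : V → V → ℝ)
    (p1 : List V) (x1 y1 : V) (p2 : List V) (x2 y2 : V) : ℕ :=
  ∑ᶠ c ∈ concordantSet p1 x1 y1 p2 x2 y2, deltaCard E ℓ c.1 c.2

/-- `E(x, y)` : the set of edges lying on at least one shortest path
from `x` to `y`. -/
def shortestEdges (E : V → V → Prop) (ℓ : V → V → ℝ) (x y : V) : Set (V × V) :=
  {e | ∃ p : List V, IsShortestPath E ℓ p x y ∧ e ∈ pathEdges p}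

section Poly

variable (F : Type*) [Field F] [CharP F 2]

/-- The monomial `f(P) = ∏_{e ∈ E(P)} z_e` of a path. -/
noncomputable def pathMon (p : List V) : MvPolynomial (V × V) F :=
  ((pathEdges p).map fun e => MvPolynomial.X e).prod

/-- The enumerating polynomial of a collection of paths. -/
noncomputable def enumPoly (S : Set (List V)) : MvPolynomial (V × V) F :=
  ∑ᶠ p ∈ S, pathMon F p

/-- The enumerating polynomial of a collection of pairs of paths. -/
noncomputable def enumPoly2 (S : Set (List V × List V)) : MvPolynomial (V × V) F :=
  ∑ᶠ q ∈ S, pathMon F q.1 * pathMon F q.2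

variable (E : V → V → Prop) (ℓ : V → V → ℝ)

/-- `F(x, y)` : the enumerating polynomial of `Π(x, y)`. -/
noncomputable def Fpoly (x y : V) : MvPolynomial (V × V) F :=
  enumPoly F {p : List V | IsShortestPath E ℓ p x y}

end Poly

variable (E : V → V → Prop) (ℓ : V → V → ℝ)

/-- The collection of internally vertex-disjoint pairs
`(P1, P2) ∈ Π(x1, y1) × Π(x2, y2)`. -/
def disjPairs (x1 y1 x2 y2 : V) : Set (List V × List V) :=
  {q | IsShortestPath E ℓ q.1 x1 y1 ∧ IsShortestPath E ℓ q.2 x2 y2 ∧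
       InternallyDisjoint q.1 x1 y1 q.2 x2 y2}

/-- Pairs `(P1, P2) ∈ Π(x1, y1) × Π(x2, y2)` such that `v ∈ V(P1) ∩ V(P2)`
and the prefix `P1[x1, v]` and the suffix `P2[v, y2]` are internally
vertex-disjoint (defining `H_v`). -/
def HvPairs (v x1 y1 x2 y2 : V) : Set (List V × List V) :=
  {q | IsShortestPath E ℓ q.1 x1 y1 ∧ IsShortestPath E ℓ q.2 x2 y2 ∧
       v ∈ q.1 ∧ v ∈ q.2 ∧
       InternallyDisjoint (subpath q.1 x1 v) x1 v (subpath q.2 v y2) v y2}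

/-- Pairs `(P1, P2) ∈ Π(x1, y1) × Π(x2, y2)` such that
`(a, v) ∈ E(P1) ∩ E(P2)` and the prefix `P1[x1, a]` and the suffix
`P2[v, y2]` are internally vertex-disjoint (defining `H_{av}`). -/
def HavPairs (a v x1 y1 x2 y2 : V) : Set (List V × List V) :=
  {q | IsShortestPath E ℓ q.1 x1 y1 ∧ IsShortestPath E ℓ q.2 x2 y2 ∧
       (a, v) ∈ pathEdges q.1 ∧ (a, v) ∈ pathEdges q.2 ∧
       InternallyDisjoint (subpath q.1 x1 a) x1 a (subpath q.2 v y2) v y2}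

/-- Pairs `(P1, P2) ∈ Π(x1, y1) × Π(x2, y2)` such that `v ∈ V(P1) ∩ V(P2)`
and the prefix `P1[x1, v]` is internally vertex-disjoint from both
`P2[x2, v]` and `P2[v, y2]` (defining `D_v`). -/
def DvPairs (v x1 y1 x2 y2 : V) : Set (List V × List V) :=
  {q | IsShortestPath E ℓ q.1 x1 y1 ∧ IsShortestPath E ℓ q.2 x2 y2 ∧
       v ∈ q.1 ∧ v ∈ q.2 ∧
       InternallyDisjoint (subpath q.1 x1 v) x1 v (subpath q.2 x2 v) x2 v ∧
       InternallyDisjoint (subpath q.1 x1 v) x1 v (subpath q.2 v y2) v y2}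

/-- Pairs `(P1, P2) ∈ Π(x1, y1) × Π(x2, y2)` with interaction complexity
`γ(P1, P2) ≤ k` (defining `F_{disj,k}`). -/
def disjkPairs (k : ℤ) (x1 y1 x2 y2 : V) : Set (List V × List V) :=
  {q | IsShortestPath E ℓ q.1 x1 y1 ∧ IsShortestPath E ℓ q.2 x2 y2 ∧
       (gamma E ℓ q.1 x1 y1 q.2 x2 y2 : ℤ) ≤ k}

/-- Pairs `(P1, P2) ∈ Π(x1, y1) × Π(x2, y2)` with `γ(P1, P2) ≤ k` such that
`(v, w) ∈ 𝒞(P1, P2)` and `(v, w)` is the concordant pair appearing first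
along `P1` (defining `D_{v,w,k}`). -/
def DvwkPairs (k : ℤ) (v w x1 y1 x2 y2 : V) : Set (List V × List V) :=
  {q | IsShortestPath E ℓ q.1 x1 y1 ∧ IsShortestPath E ℓ q.2 x2 y2 ∧
       (gamma E ℓ q.1 x1 y1 q.2 x2 y2 : ℤ) ≤ k ∧
       (v, w) ∈ concordantSet q.1 x1 y1 q.2 x2 y2 ∧
       ∀ c ∈ concordantSet q.1 x1 y1 q.2 x2 y2, q.1.idxOf v ≤ q.1.idxOf c.1}

/-- Pairs `(P1, P2) ∈ Π(x1, y1) × Π(x2, y2)` such that `v` and `w` lie on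
both paths with `v` preceding `w` on both, the subpaths `P1[x1, v]` and
`P2[w, y2]` are internally vertex-disjoint, and
`γ(P1[v, y1], P2[x2, w]) ≤ k` (defining `H_{v,w,k}`). -/
def HvwkPairs (k : ℤ) (v w x1 y1 x2 y2 : V) : Set (List V × List V) :=
  {q | IsShortestPath E ℓ q.1 x1 y1 ∧ IsShortestPath E ℓ q.2 x2 y2 ∧
       Precedes q.1 v w ∧ Precedes q.2 v w ∧
       InternallyDisjoint (subpath q.1 x1 v) x1 v (subpath q.2 w y2) w y2 ∧
       (gamma E ℓ (subpath q.1 v y1) v y1 (subpath q.2 x2 w) x2 w : ℤ) ≤ k}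

/-- As `HvwkPairs`, additionally requiring the edge `(a, v)` on both paths
(disjointness imposed on `P1[x1, a]` and `P2[w, y2]`), defining `H_{av,w,k}`. -/
def HavwkPairs (k : ℤ) (a v w x1 y1 x2 y2 : V) : Set (List V × List V) :=
  {q | IsShortestPath E ℓ q.1 x1 y1 ∧ IsShortestPath E ℓ q.2 x2 y2 ∧
       Precedes q.1 v w ∧ Precedes q.2 v w ∧
       (a, v) ∈ pathEdges q.1 ∧ (a, v) ∈ pathEdges q.2 ∧
       InternallyDisjoint (subpath q.1 x1 a) x1 a (subpath q.2 w y2) w y2 ∧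
       (gamma E ℓ (subpath q.1 v y1) v y1 (subpath q.2 x2 w) x2 w : ℤ) ≤ k}

/-- As `HvwkPairs`, additionally requiring the edge `(w, b)` on both paths
(disjointness imposed on `P1[x1, v]` and `P2[b, y2]`), defining `H_{v,wb,k}`. -/
def HvwbkPairs (k : ℤ) (v w b x1 y1 x2 y2 : V) : Set (List V × List V) :=
  {q | IsShortestPath E ℓ q.1 x1 y1 ∧ IsShortestPath E ℓ q.2 x2 y2 ∧
       Precedes q.1 v w ∧ Precedes q.2 v w ∧
       (w, b) ∈ pathEdges q.1 ∧ (w, b) ∈ pathEdges q.2 ∧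
       InternallyDisjoint (subpath q.1 x1 v) x1 v (subpath q.2 b y2) b y2 ∧
       (gamma E ℓ (subpath q.1 v y1) v y1 (subpath q.2 x2 w) x2 w : ℤ) ≤ k}

/-- As `HvwkPairs`, additionally requiring both edges `(a, v)` and `(w, b)`
on both paths (disjointness imposed on `P1[x1, a]` and `P2[b, y2]`),
defining `H_{av,wb,k}`. -/
def HavwbkPairs (k : ℤ) (a v w b x1 y1 x2 y2 : V) : Set (List V × List V) :=
  {q | IsShortestPath E ℓ q.1 x1 y1 ∧ IsShortestPath E ℓ q.2 x2 y2 ∧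
       Precedes q.1 v w ∧ Precedes q.2 v w ∧
       (a, v) ∈ pathEdges q.1 ∧ (a, v) ∈ pathEdges q.2 ∧
       (w, b) ∈ pathEdges q.1 ∧ (w, b) ∈ pathEdges q.2 ∧
       InternallyDisjoint (subpath q.1 x1 a) x1 a (subpath q.2 b y2) b y2 ∧
       (gamma E ℓ (subpath q.1 v y1) v y1 (subpath q.2 x2 w) x2 w : ℤ) ≤ k}

/-!
Among the concordant pairs of `(P₁, P₂)`, the one whose first vertex comes earliest on `P₁` is
unique. Its first vertex is pinned down by minimality. For the second, positive weights force two
shortest paths leaving a common vertex to visit their common vertices in the same order, so a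
second candidate would lie on both suffixes after the first, which the disjointness of those
suffixes forbids. The hypothesis makes `𝒞(P₁, P₂)` nonempty: take the first common vertex on `P₁`
outside `{x₁, y₁} ∩ {x₂, y₂}`, and the last such vertex after it on both paths. Hence the sets
counted by `D_{v,w,k}` partition those counted by `F_{disj,k}`.
-/

section Walks

omit [Fintype V] [DecidableEq V]

variable {E ℓ}

theorem IsPathFrom.start_mem {p : List V} {x y : V} (hp : IsPathFrom E p x y) : x ∈ p :=
  List.mem_of_mem_head? hp.2.1

theorem IsPathFrom.end_mem {p : List V} {x y : V} (hp : IsPathFrom E p x y) : y ∈ p :=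
  List.mem_of_mem_getLast? hp.2.2

theorem pathWeight_cons_cons (a b : V) (l : List V) :
    pathWeight ℓ (a :: b :: l) = ℓ a b + pathWeight ℓ (b :: l) := by
  simp [pathWeight, pathEdges]

theorem pathWeight_append_cons (l₁ : List V) (v : V) (l₂ : List V) :
    pathWeight ℓ (l₁ ++ v :: l₂) = pathWeight ℓ (l₁ ++ [v]) + pathWeight ℓ (v :: l₂) := by
  induction l₁ with
  | nil => simp [pathWeight, pathEdges]
  | cons a l₁ ih =>
    cases l₁ with
    | nil => simp [pathWeight, pathEdges]
    | cons b l₁ =>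
      simp only [List.cons_append, pathWeight_cons_cons] at ih ⊢
      rw [ih, add_assoc]

theorem pathWeight_concat {p q : List V} {v : V} (hp : p.getLast? = some v)
    (hq : q.head? = some v) :
    pathWeight ℓ (pathConcat p q) = pathWeight ℓ p + pathWeight ℓ q := by
  obtain ⟨p, rfl⟩ := List.getLast?_eq_some_iff.1 hp
  obtain ⟨q, rfl⟩ := List.head?_eq_some_iff.1 hq
  rw [show pathConcat (p ++ [v]) (v :: q) = p ++ v :: q by simp [pathConcat],
    pathWeight_append_cons]

theorem pathWeight_nonneg (hℓ : ∀ a b, E a b → 0 ≤ ℓ a b) {l : List V} (hl : l.IsChain E) :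
    0 ≤ pathWeight ℓ l := by
  induction l with
  | nil => simp [pathWeight, pathEdges]
  | cons a l ih =>
    cases l with
    | nil => simp [pathWeight, pathEdges]
    | cons b l =>
      rw [List.isChain_cons_cons] at hl
      rw [pathWeight_cons_cons]
      exact add_nonneg (hℓ a b hl.1) (ih hl.2)

theorem pathWeight_pos (hℓ : ∀ a b, E a b → 0 < ℓ a b) {l : List V} (hl : l.IsChain E)
    (hlen : 2 ≤ l.length) : 0 < pathWeight ℓ l := by
  match l, hl, hlen with
  | a :: b :: l, hl, _ =>
    rw [List.isChain_cons_cons] at hl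
    rw [pathWeight_cons_cons]
    exact add_pos_of_pos_of_nonneg (hℓ a b hl.1)
      (pathWeight_nonneg (fun a b h => (hℓ a b h).le) hl.2)

variable (E) in
def IsWalkFrom (l : List V) (x y : V) : Prop :=
  l.IsChain E ∧ l.head? = some x ∧ l.getLast? = some y

theorem IsPathFrom.isWalkFrom {p : List V} {x y : V} (hp : IsPathFrom E p x y) :
    IsWalkFrom E p x y :=
  ⟨hp.1.2.2, hp.2⟩

theorem IsWalkFrom.concat {p q : List V} {x y z : V} (hp : IsWalkFrom E p x y)
    (hq : IsWalkFrom E q y z) : IsWalkFrom E (pathConcat p q) x z := by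
  obtain ⟨p, rfl⟩ := List.getLast?_eq_some_iff.1 hp.2.2
  obtain ⟨q, rfl⟩ := List.head?_eq_some_iff.1 hq.2.1
  have hpq : pathConcat (p ++ [y]) (y :: q) = p ++ y :: q := by simp [pathConcat]
  rw [hpq]
  refine ⟨List.isChain_split.2 ⟨hp.1, hq.1⟩, ?_, ?_⟩
  · simpa [List.head?_append] using hp.2.1
  · simpa [List.getLast?_append] using hq.2.2

/-- Cutting out the closed subwalk between two occurrences of a repeated vertex does not
increase the weight. -/
theorem IsWalkFrom.exists_isPathFrom_le (hℓ : ∀ a b, E a b → 0 ≤ ℓ a b) {l : List V}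
    {x y : V} (hl : IsWalkFrom E l x y) :
    ∃ p, IsPathFrom E p x y ∧ pathWeight ℓ p ≤ pathWeight ℓ l := by
  induction hn : l.length using Nat.strong_induction_on generalizing l with
  | _ n ih =>
  by_cases hnd : l.Nodup
  · exact ⟨l, ⟨⟨List.ne_nil_of_mem (List.mem_of_mem_head? hl.2.1), hnd, hl.1⟩, hl.2⟩, le_rfl⟩
  obtain ⟨a, hdup⟩ := List.exists_duplicate_iff_not_nodup.2 hnd
  obtain ⟨r₁, r₂, rfl, ha₁, ha₂⟩ := List.cons_sublist_iff.1 (List.duplicate_iff_sublist.1 hdup)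
  obtain ⟨s, m₁, rfl⟩ := List.append_of_mem ha₁
  obtain ⟨m₂, r, rfl⟩ := List.append_of_mem (List.singleton_sublist.1 ha₂)
  set m := m₁ ++ m₂
  have hsplit : s ++ a :: m₁ ++ (m₂ ++ a :: r) = s ++ a :: (m ++ a :: r) := by simp [m]
  rw [hsplit] at hl hn ⊢
  obtain ⟨hs, hloop⟩ := List.isChain_split.1 hl.1
  obtain ⟨hcycle, hr⟩ := (List.isChain_split (l₁ := a :: m)).1 hloop
  have hshort : IsWalkFrom E (s ++ a :: r) x y := by
    refine ⟨List.isChain_split.2 ⟨hs, hr⟩, ?_, ?_⟩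
    · simpa [List.head?_append] using hl.2.1
    · simpa [List.getLast?_cons] using hl.2.2
  obtain ⟨p, hp, hpw⟩ := ih _ (by simp at hn ⊢; omega) hshort rfl
  refine ⟨p, hp, hpw.trans ?_⟩
  have hcut : pathWeight ℓ (s ++ a :: (m ++ a :: r)) =
      pathWeight ℓ (s ++ a :: r) + pathWeight ℓ (a :: m ++ [a]) := by
    rw [pathWeight_append_cons s a (m ++ a :: r), pathWeight_append_cons s a r,
      show a :: (m ++ a :: r) = a :: m ++ a :: r from rfl, pathWeight_append_cons (a :: m) a r]
    ring
  linarith [pathWeight_nonneg hℓ hcycle]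

theorem IsShortestPath.pathWeight_le {P Q : List V} {x y : V}
    (hP : IsShortestPath E ℓ P x y) (hQ : IsPathFrom E Q x y) :
    pathWeight ℓ P ≤ pathWeight ℓ Q := by
  have h : dist E ℓ x y ≤ pathWeight ℓ Q := sInf_le ⟨Q, hQ, rfl⟩
  rw [← hP.2] at h
  exact_mod_cast h

theorem IsShortestPath.pathWeight_le_of_isWalkFrom (hℓ : ∀ a b, E a b → 0 ≤ ℓ a b)
    {P W : List V} {x y : V} (hP : IsShortestPath E ℓ P x y) (hW : IsWalkFrom E W x y) :
    pathWeight ℓ P ≤ pathWeight ℓ W := by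
  obtain ⟨Q, hQ, hQW⟩ := hW.exists_isPathFrom_le hℓ
  exact (hP.pathWeight_le hQ).trans hQW

theorem IsShortestPath.pathWeight_eq {P Q : List V} {x y : V}
    (hP : IsShortestPath E ℓ P x y) (hQ : IsShortestPath E ℓ Q x y) :
    pathWeight ℓ P = pathWeight ℓ Q := by
  exact_mod_cast hP.2.trans hQ.2.symm

end Walks

section Subpath

omit [Fintype V]

variable {E}

theorem mem_subpath_iff {p : List V} (hp : p.Nodup) {u t s : V} :
    s ∈ subpath p u t ↔ s ∈ p ∧ p.idxOf u ≤ p.idxOf s ∧ p.idxOf s ≤ p.idxOf t := by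
  simp only [subpath, List.mem_drop_iff_getElem, List.getElem_take, List.length_take]
  constructor
  · rintro ⟨j, hj, rfl⟩
    rw [hp.idxOf_getElem]
    exact ⟨List.getElem_mem _, by omega, by omega⟩
  · rintro ⟨hs, hus, hst⟩
    have := List.idxOf_lt_length_iff.2 hs
    refine ⟨p.idxOf s - p.idxOf u, by omega, ?_⟩
    simp only [show p.idxOf u + (p.idxOf s - p.idxOf u) = p.idxOf s by omega,
      List.getElem_idxOf]

theorem subpath_head? {p : List V} {u t : V} (hu : u ∈ p) (ht : t ∈ p)
    (hut : p.idxOf u ≤ p.idxOf t) : (subpath p u t).head? = some u := by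
  have := List.idxOf_lt_length_iff.2 ht
  simp [subpath, List.head?_drop, show p.idxOf u < p.idxOf t + 1 by omega, hu]

theorem subpath_getLast? {p : List V} {u t : V} (ht : t ∈ p) (hut : p.idxOf u ≤ p.idxOf t) :
    (subpath p u t).getLast? = some t := by
  have := List.idxOf_lt_length_iff.2 ht
  simp [subpath, List.getLast?_drop, List.getLast?_take, hut, ht,
    show p.idxOf u < p.length by omega]

theorem subpath_length {p : List V} {u t : V} (ht : t ∈ p) :
    (subpath p u t).length = p.idxOf t + 1 - p.idxOf u := by
  have := List.idxOf_lt_length_iff.2 ht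
  simp only [subpath, List.length_drop, List.length_take]
  omega

theorem subpath_isInfix (p : List V) (u t : V) : subpath p u t <:+: p :=
  (List.drop_suffix _ _).isInfix.trans (List.take_prefix _ _).isInfix

theorem subpath_concat {p : List V} {a b c : V}
    (hab : p.idxOf a ≤ p.idxOf b) (hbc : p.idxOf b ≤ p.idxOf c) :
    pathConcat (subpath p a b) (subpath p b c) = subpath p a c := by
  have htake : p.take (p.idxOf b + 1) = (p.take (p.idxOf c + 1)).take (p.idxOf b + 1) := by
    rw [List.take_take, min_eq_left (by omega)]
  obtain ⟨n, hn⟩ : ∃ n, p.idxOf b + 1 = p.idxOf a + n :=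
    ⟨_, (Nat.add_sub_of_le (by omega)).symm⟩
  rw [pathConcat, subpath, subpath, subpath, List.tail_drop, htake, List.drop_take, hn,
    Nat.add_sub_cancel_left, List.drop_take_append_drop]

theorem IsPathFrom.idxOf_start {p : List V} {x y : V} (hp : IsPathFrom E p x y) :
    p.idxOf x = 0 := by
  obtain ⟨q, rfl⟩ := List.head?_eq_some_iff.1 hp.2.1
  exact List.idxOf_cons_self

theorem IsPathFrom.idxOf_end {p : List V} {x y : V} (hp : IsPathFrom E p x y) :
    p.idxOf y = p.length - 1 := by
  obtain ⟨q, rfl⟩ := List.getLast?_eq_some_iff.1 hp.2.2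
  simpa using hp.1.2.1.idxOf_getElem q.length (by simp)

theorem IsPathFrom.idxOf_le_end {p : List V} {x y s : V} (hp : IsPathFrom E p x y)
    (hs : s ∈ p) : p.idxOf s ≤ p.idxOf y := by
  have := List.idxOf_lt_length_iff.2 hs
  rw [hp.idxOf_end]
  omega

theorem IsPathFrom.eq_of_start_mem_subpath {p : List V} {x y u t : V}
    (hp : IsPathFrom E p x y) (hx : x ∈ subpath p u t) : x = u := by
  have hux := ((mem_subpath_iff hp.1.2.1).1 hx).2.1
  rw [hp.idxOf_start] at hux
  exact (List.idxOf_inj hp.start_mem).1 (by rw [hp.idxOf_start]; omega)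

theorem IsPathFrom.eq_of_end_mem_subpath {p : List V} {x y u t : V}
    (hp : IsPathFrom E p x y) (ht : t ∈ p) (hy : y ∈ subpath p u t) : y = t :=
  (List.idxOf_inj hp.end_mem).1
    (le_antisymm ((mem_subpath_iff hp.1.2.1).1 hy).2.2 (hp.idxOf_le_end ht))

theorem IsPathFrom.isPathFrom_subpath {p : List V} {x y u t : V} (hp : IsPathFrom E p x y)
    (hu : u ∈ p) (ht : t ∈ p) (hut : p.idxOf u ≤ p.idxOf t) :
    IsPathFrom E (subpath p u t) u t :=
  ⟨⟨List.ne_nil_of_mem (List.mem_of_mem_head? (subpath_head? hu ht hut)),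
      hp.1.2.1.sublist (subpath_isInfix p u t).sublist,
      hp.1.2.2.infix (subpath_isInfix p u t)⟩,
    subpath_head? hu ht hut, subpath_getLast? ht hut⟩

theorem IsPathFrom.subpath_start_end {p : List V} {x y : V} (hp : IsPathFrom E p x y) :
    subpath p x y = p := by
  rw [subpath, hp.idxOf_start, List.drop_zero, List.take_of_length_le (by rw [hp.idxOf_end]; omega)]

end Subpath

section ShortestPaths

omit [Fintype V]

variable {E ℓ}

theorem pathWeight_subpath_add {p : List V} {a b c : V} (hb : b ∈ p) (hc : c ∈ p)
    (hab : p.idxOf a ≤ p.idxOf b) (hbc : p.idxOf b ≤ p.idxOf c) :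
    pathWeight ℓ (subpath p a b) + pathWeight ℓ (subpath p b c) =
      pathWeight ℓ (subpath p a c) := by
  rw [← subpath_concat hab hbc,
    pathWeight_concat (subpath_getLast? hb hab) (subpath_head? hb hc hbc)]

theorem pathWeight_subpath_lt (hℓ : ∀ a b, E a b → 0 < ℓ a b) {p : List V}
    (hp : p.IsChain E) {v s t : V} (hs : s ∈ p) (ht : t ∈ p)
    (hvs : p.idxOf v ≤ p.idxOf s) (hst : p.idxOf s < p.idxOf t) :
    pathWeight ℓ (subpath p v s) < pathWeight ℓ (subpath p v t) := by
  rw [← pathWeight_subpath_add hs ht hvs hst.le]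
  have : 0 < pathWeight ℓ (subpath p s t) :=
    pathWeight_pos hℓ (hp.infix (subpath_isInfix p s t)) (by rw [subpath_length ht]; omega)
  linarith

theorem IsShortestPath.isShortestPath_subpath (hℓ : ∀ a b, E a b → 0 ≤ ℓ a b)
    {P : List V} {x y u t : V} (hP : IsShortestPath E ℓ P x y) (hu : u ∈ P) (ht : t ∈ P)
    (hut : P.idxOf u ≤ P.idxOf t) : IsShortestPath E ℓ (subpath P u t) u t := by
  have hp := hP.1
  have hsub := hp.isPathFrom_subpath hu ht hut
  refine ⟨hsub, le_antisymm (le_sInf ?_) (sInf_le ⟨_, hsub, rfl⟩)⟩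
  rintro _ ⟨Q, hQ, rfl⟩
  have hxu : P.idxOf x ≤ P.idxOf u := by rw [hp.idxOf_start]; exact Nat.zero_le _
  have hty := hp.idxOf_le_end ht
  have hpre := hp.isPathFrom_subpath hp.start_mem hu hxu
  have hsuf := hp.isPathFrom_subpath ht hp.end_mem hty
  have hdetour := hP.pathWeight_le_of_isWalkFrom hℓ
    ((hpre.isWalkFrom.concat hQ.isWalkFrom).concat hsuf.isWalkFrom)
  have hsplit : pathWeight ℓ P = pathWeight ℓ (subpath P x u) +
      pathWeight ℓ (subpath P u t) + pathWeight ℓ (subpath P t y) := by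
    rw [pathWeight_subpath_add hu ht hxu hut, pathWeight_subpath_add ht hp.end_mem
      (hxu.trans hut) hty, hp.subpath_start_end]
  rw [pathWeight_concat (hpre.isWalkFrom.concat hQ.isWalkFrom).2.2 hsuf.2.1,
    pathWeight_concat hpre.2.2 hQ.2.1] at hdetour
  exact_mod_cast (by linarith : pathWeight ℓ (subpath P u t) ≤ pathWeight ℓ Q)

/-- Two shortest paths leaving a common vertex `v` visit their common vertices in the same
order. -/
theorem IsShortestPath.idxOf_le_of_idxOf_lt (hℓ : ∀ a b, E a b → 0 < ℓ a b)
    {P₁ P₂ : List V} {x₁ y₁ x₂ y₂ v w₁ w₂ : V}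
    (hP₁ : IsShortestPath E ℓ P₁ x₁ y₁) (hP₂ : IsShortestPath E ℓ P₂ x₂ y₂)
    (h₁ : Precedes P₁ v w₁) (h₂ : Precedes P₂ v w₂) (hw₁ : w₁ ∈ P₂) (hw₂ : w₂ ∈ P₁)
    (hlt : P₁.idxOf w₁ < P₁.idxOf w₂) : P₂.idxOf w₁ ≤ P₂.idxOf w₂ := by
  obtain ⟨hv₁, hw₁₁, hvw₁⟩ := h₁
  obtain ⟨hv₂, hw₂₂, hvw₂⟩ := h₂
  have hℓ' : ∀ a b, E a b → 0 ≤ ℓ a b := fun a b h => (hℓ a b h).le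
  by_contra! hlt'
  have hshort {P : List V} {x y w : V} (hP : IsShortestPath E ℓ P x y) (hv : v ∈ P)
      (hw : w ∈ P) (hvw : P.idxOf v ≤ P.idxOf w) :=
    hP.isShortestPath_subpath hℓ' hv hw hvw
  have heq₁ := (hshort hP₁ hv₁ hw₁₁ hvw₁).pathWeight_eq (hshort hP₂ hv₂ hw₁ (hvw₂.trans hlt'.le))
  have heq₂ := (hshort hP₁ hv₁ hw₂ (hvw₁.trans hlt.le)).pathWeight_eq (hshort hP₂ hv₂ hw₂₂ hvw₂)
  have hlt₁ := pathWeight_subpath_lt hℓ hP₁.1.1.2.2 hw₁₁ hw₂ hvw₁ hlt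
  have hlt₂ := pathWeight_subpath_lt hℓ hP₂.1.1.2.2 hw₂₂ hw₁ hvw₂ hlt'
  linarith

end ShortestPaths

section Concordant

omit [Fintype V]

variable {E ℓ}

theorem internallyDisjoint_subpath_start {P₁ P₂ : List V} {x₁ y₁ x₂ y₂ a : V}
    (hP₁ : IsPathFrom E P₁ x₁ y₁) (hP₂ : IsPathFrom E P₂ x₂ y₂) (ha₁ : a ∈ P₁) (ha₂ : a ∈ P₂)
    (hmin : ∀ s ∈ P₁, s ∈ P₂ → s ∉ ({x₁, y₁} ∩ {x₂, y₂} : Set V) →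
      P₁.idxOf s ≤ P₁.idxOf a → s = a) :
    InternallyDisjoint (subpath P₁ x₁ a) x₁ a (subpath P₂ x₂ a) x₂ a := by
  intro s hs₁ hs₂
  have ha : s = a → s ∈ ({x₁, a} ∩ {x₂, a} : Set V) := by rintro rfl; simp
  by_cases hsI : s ∈ ({x₁, y₁} ∩ {x₂, y₂} : Set V)
  · obtain ⟨rfl | rfl, rfl | rfl⟩ := hsI
    · simp
    · exact ha (hP₂.eq_of_end_mem_subpath ha₂ hs₂)
    · exact ha (hP₁.eq_of_end_mem_subpath ha₁ hs₁)
    · exact ha (hP₁.eq_of_end_mem_subpath ha₁ hs₁)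
  · have h₁ := (mem_subpath_iff hP₁.1.2.1).1 hs₁
    exact ha (hmin s h₁.1 ((mem_subpath_iff hP₂.1.2.1).1 hs₂).1 hsI h₁.2.2)

theorem internallyDisjoint_subpath_end {P₁ P₂ : List V} {x₁ y₁ x₂ y₂ b : V}
    (hP₁ : IsPathFrom E P₁ x₁ y₁) (hP₂ : IsPathFrom E P₂ x₂ y₂)
    (hmax : ∀ s ∈ P₁, s ∈ P₂ → s ∉ ({x₁, y₁} ∩ {x₂, y₂} : Set V) →
      P₁.idxOf b ≤ P₁.idxOf s → P₂.idxOf b ≤ P₂.idxOf s → s = b) :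
    InternallyDisjoint (subpath P₁ b y₁) b y₁ (subpath P₂ b y₂) b y₂ := by
  intro s hs₁ hs₂
  have hb : s = b → s ∈ ({b, y₁} ∩ {b, y₂} : Set V) := by rintro rfl; simp
  by_cases hsI : s ∈ ({x₁, y₁} ∩ {x₂, y₂} : Set V)
  · obtain ⟨rfl | rfl, rfl | rfl⟩ := hsI
    · exact hb (hP₁.eq_of_start_mem_subpath hs₁)
    · exact hb (hP₁.eq_of_start_mem_subpath hs₁)
    · exact hb (hP₂.eq_of_start_mem_subpath hs₂)
    · simp
  · have h₁ := (mem_subpath_iff hP₁.1.2.1).1 hs₁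
    have h₂ := (mem_subpath_iff hP₂.1.2.1).1 hs₂
    exact hb (hmax s h₁.1 h₂.1 hsI h₁.2.1 h₂.2.1)

/-- Take `a` to be the common non-shared-endpoint vertex coming first on `P₁`, and `b` the one
coming last on `P₁` among those lying after `a` on both paths. -/
theorem exists_concordantPair {P₁ P₂ : List V} {x₁ y₁ x₂ y₂ u : V}
    (hP₁ : IsPathFrom E P₁ x₁ y₁) (hP₂ : IsPathFrom E P₂ x₂ y₂)
    (hu₁ : Internal P₁ u) (hu₂ : Internal P₂ u) :
    ∃ a b, ConcordantPair P₁ x₁ y₁ P₂ x₂ y₂ a b := by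
  set I : Set V := {x₁, y₁} ∩ {x₂, y₂}
  set S : Set V := {s | s ∈ P₁ ∧ s ∈ P₂ ∧ s ∉ I}
  have huS : u ∈ S := by
    refine ⟨hu₁.1, hu₂.1, fun ⟨h, _⟩ => ?_⟩
    obtain rfl | rfl := h
    exacts [hu₁.2.1 hP₁.2.1, hu₁.2.2 hP₁.2.2]
  obtain ⟨a, ⟨ha₁, ha₂, haI⟩, hamin⟩ :=
    Set.exists_min_image S (fun s => P₁.idxOf s) (P₁.finite_toSet.subset fun _ h => h.1) ⟨u, huS⟩
  set U : Set V := {s | s ∈ S ∧ P₁.idxOf a ≤ P₁.idxOf s ∧ P₂.idxOf a ≤ P₂.idxOf s}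
  obtain ⟨b, ⟨⟨hb₁, hb₂, hbI⟩, hab₁, hab₂⟩, hbmax⟩ :=
    Set.exists_max_image U (fun s => P₁.idxOf s) (P₁.finite_toSet.subset fun _ h => h.1.1)
      ⟨a, ⟨ha₁, ha₂, haI⟩, le_rfl, le_rfl⟩
  refine ⟨a, b, haI, hbI, ⟨ha₁, hb₁, hab₁⟩, ⟨ha₂, hb₂, hab₂⟩,
    internallyDisjoint_subpath_start hP₁ hP₂ ha₁ ha₂ fun s hs₁ hs₂ hsI hsa => ?_,
    internallyDisjoint_subpath_end hP₁ hP₂ fun s hs₁ hs₂ hsI hbs₁ hbs₂ => ?_⟩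
  · exact (List.idxOf_inj hs₁).1 (le_antisymm hsa (hamin s ⟨hs₁, hs₂, hsI⟩))
  · exact (List.idxOf_inj hs₁).1
      (le_antisymm (hbmax s ⟨⟨hs₁, hs₂, hsI⟩, hab₁.trans hbs₁, hab₂.trans hbs₂⟩) hbs₁)

theorem ConcordantPair.idxOf_right_le (hℓ : ∀ a b, E a b → 0 < ℓ a b)
    {P₁ P₂ : List V} {x₁ y₁ x₂ y₂ v w₁ w₂ : V}
    (hP₁ : IsShortestPath E ℓ P₁ x₁ y₁) (hP₂ : IsShortestPath E ℓ P₂ x₂ y₂)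
    (hc₁ : ConcordantPair P₁ x₁ y₁ P₂ x₂ y₂ v w₁) (hc₂ : ConcordantPair P₁ x₁ y₁ P₂ x₂ y₂ v w₂) :
    P₁.idxOf w₂ ≤ P₁.idxOf w₁ := by
  obtain ⟨-, -, hvw₁, hvw₁', -, hend⟩ := hc₁
  obtain ⟨-, hw₂I, hvw₂, hvw₂', -, -⟩ := hc₂
  by_contra! hlt
  have hw₂₁ := hvw₂.2.1
  have hw₂₂ := hvw₂'.2.1
  have hlt' := hP₁.idxOf_le_of_idxOf_lt hℓ hP₂ hvw₁ hvw₂' hvw₁'.2.1 hw₂₁ hlt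
  have hmem₁ : w₂ ∈ subpath P₁ w₁ y₁ :=
    (mem_subpath_iff hP₁.1.1.2.1).2 ⟨hw₂₁, hlt.le, hP₁.1.idxOf_le_end hw₂₁⟩
  have hmem₂ : w₂ ∈ subpath P₂ w₁ y₂ :=
    (mem_subpath_iff hP₂.1.1.2.1).2 ⟨hw₂₂, hlt', hP₂.1.idxOf_le_end hw₂₂⟩
  have hne : w₂ ≠ w₁ := ne_of_apply_ne P₁.idxOf hlt.ne'
  obtain ⟨h₁ | h₁, h₂ | h₂⟩ := hend w₂ hmem₁ hmem₂
  exacts [hne h₁, hne h₁, hne h₂, hw₂I ⟨Or.inr h₁, Or.inr h₂⟩]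

theorem ConcordantPair.right_unique (hℓ : ∀ a b, E a b → 0 < ℓ a b)
    {P₁ P₂ : List V} {x₁ y₁ x₂ y₂ v w₁ w₂ : V}
    (hP₁ : IsShortestPath E ℓ P₁ x₁ y₁) (hP₂ : IsShortestPath E ℓ P₂ x₂ y₂)
    (hc₁ : ConcordantPair P₁ x₁ y₁ P₂ x₂ y₂ v w₁) (hc₂ : ConcordantPair P₁ x₁ y₁ P₂ x₂ y₂ v w₂) :
    w₁ = w₂ :=
  (List.idxOf_inj hc₁.2.2.1.2.1).1
    (le_antisymm (hc₂.idxOf_right_le hℓ hP₁ hP₂ hc₁) (hc₁.idxOf_right_le hℓ hP₁ hP₂ hc₂))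

end Concordant

section Enumeration

omit [Fintype V] [DecidableEq V] in
theorem enumPoly2_iUnion (F : Type*) [Field F] {ι : Type*} [Fintype ι]
    {t : ι → Set (List V × List V)} (hdisj : Pairwise (Function.onFun Disjoint t))
    (hfin : ∀ i, (t i).Finite) :
    enumPoly2 F (⋃ i, t i) = ∑ i, enumPoly2 F (t i) := by
  rw [enumPoly2, finsum_mem_iUnion hdisj hfin, finsum_eq_sum_of_fintype]
  rfl

variable {E ℓ}

omit [DecidableEq V] in
theorem finite_setOf_isPath : {p : List V | IsPath E p}.Finite :=
  (List.finite_length_le V (Fintype.card V)).subset fun _ hp => hp.2.1.length_le_card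

theorem finite_DvwkPairs {k : ℤ} {v w x₁ y₁ x₂ y₂ : V} :
    (DvwkPairs E ℓ k v w x₁ y₁ x₂ y₂).Finite :=
  (finite_setOf_isPath.prod finite_setOf_isPath).subset fun _ hq => ⟨hq.1.1.1, hq.2.1.1.1⟩

theorem disjkPairs_eq_iUnion_DvwkPairs {k : ℤ} {x₁ y₁ x₂ y₂ : V}
    (hint : ∀ P₁ P₂ : List V, IsShortestPath E ℓ P₁ x₁ y₁ →
      IsShortestPath E ℓ P₂ x₂ y₂ → ∃ u, Internal P₁ u ∧ Internal P₂ u) :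
    disjkPairs E ℓ k x₁ y₁ x₂ y₂ = ⋃ c : V × V, DvwkPairs E ℓ k c.1 c.2 x₁ y₁ x₂ y₂ := by
  refine Set.Subset.antisymm (fun q ⟨h₁, h₂, hγ⟩ => ?_)
    (Set.iUnion_subset fun _ _ hq => ⟨hq.1, hq.2.1, hq.2.2.1⟩)
  obtain ⟨u, hu₁, hu₂⟩ := hint q.1 q.2 h₁ h₂
  obtain ⟨a, b, hab⟩ := exists_concordantPair h₁.1 h₂.1 hu₁ hu₂
  obtain ⟨c, hc, hmin⟩ := Set.exists_min_image (concordantSet q.1 x₁ y₁ q.2 x₂ y₂)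
    (fun c => q.1.idxOf c.1) (Set.toFinite _) ⟨(a, b), hab⟩
  exact Set.mem_iUnion.2 ⟨c, h₁, h₂, hγ, hc, hmin⟩

omit [Fintype V] in
theorem pairwise_disjoint_DvwkPairs (hℓ : ∀ a b, E a b → 0 < ℓ a b) {k : ℤ}
    {x₁ y₁ x₂ y₂ : V} :
    Pairwise (Function.onFun Disjoint fun c : V × V => DvwkPairs E ℓ k c.1 c.2 x₁ y₁ x₂ y₂) := by
  intro c c' hne
  refine Set.disjoint_left.2 fun q ⟨h₁, h₂, _, hc, hmin⟩ ⟨_, _, _, hc', hmin'⟩ => hne ?_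
  have hv : c.1 = c'.1 :=
    (List.idxOf_inj hc.2.2.1.1).1 (le_antisymm (hmin _ hc') (hmin' _ hc))
  exact Prod.ext hv (ConcordantPair.right_unique hℓ h₁ h₂ (hv ▸ hc) hc')

end Enumeration

theorem Fdisjk_eq_sum_Dvwk
    (F : Type*) [Field F]
    (hpos : ∀ a b : V, E a b → 0 < ℓ a b)
    (x1 y1 x2 y2 : V)
    (hint : ∀ P1 P2 : List V, IsShortestPath E ℓ P1 x1 y1 →
      IsShortestPath E ℓ P2 x2 y2 → ∃ u, Internal P1 u ∧ Internal P2 u)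
    (k : ℤ) :
    enumPoly2 F (disjkPairs E ℓ k x1 y1 x2 y2) =
      ∑ v : V, ∑ w : V, enumPoly2 F (DvwkPairs E ℓ k v w x1 y1 x2 y2) := by
  rw [disjkPairs_eq_iUnion_DvwkPairs hint,
    enumPoly2_iUnion F (pairwise_disjoint_DvwkPairs hpos) fun _ => finite_DvwkPairs,
    Fintype.sum_prod_type]

end DSP
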